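/- A left R-module is Mittag-Leffler if every finite subset is contained in a pure submodule that is Mittag-Leffler. -/

import Mathlib

open MulOpposite

section CTensor
variable (R : Type) [Ring R]
variable (N : Type) [AddCommGroup N] [Module Rᵐᵒᵖ N]
variable (M : Type) [AddCommGroup M] [Module R M]

def tensorRels : AddSubgroup (FreeAbelianGroup (N × M)) :=
  AddSubgroup.closure
    {x | (∃ n n' m, x = FreeAbelianGroup.of (n + n', m) - FreeAbelianGroup.of (n, m) -
            FreeAbelianGroup.of (n', m)) ∨
         (∃ n m m', x = FreeAbelianGroup.of (n, m + m') - FreeAbelianGroup.of (n, m) -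
            FreeAbelianGroup.of (n, m')) ∨
         (∃ (r : R) (n : N) (m : M), x = FreeAbelianGroup.of (op r • n, m) -
            FreeAbelianGroup.of (n, r • m))}

abbrev CTensor : Type := FreeAbelianGroup (N × M) ⧸ tensorRels R N M

def ctmul (n : N) (m : M) : CTensor R N M :=
  QuotientAddGroup.mk (FreeAbelianGroup.of (n, m))

variable {R N M}

theorem ctmul_add_left (n n' : N) (m : M) :
    ctmul R N M (n + n') m = ctmul R N M n m + ctmul R N M n' m := by
  rw [eq_comm, ← sub_eq_zero]
  show QuotientAddGroup.mk _ + QuotientAddGroup.mk _ - QuotientAddGroup.mk _ = (0 : CTensor R N M)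
  rw [← QuotientAddGroup.mk_add, ← QuotientAddGroup.mk_sub, QuotientAddGroup.eq_zero_iff]
  have h : FreeAbelianGroup.of (n, m) + FreeAbelianGroup.of (n', m) -
      FreeAbelianGroup.of (n + n', m) =
      -(FreeAbelianGroup.of (n + n', m) - FreeAbelianGroup.of (n, m) -
        FreeAbelianGroup.of (n', m)) := by abel
  rw [h]
  exact neg_mem (AddSubgroup.subset_closure (Or.inl ⟨n, n', m, rfl⟩))

theorem ctmul_add_right (n : N) (m m' : M) :
    ctmul R N M n (m + m') = ctmul R N M n m + ctmul R N M n m' := by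
  rw [eq_comm, ← sub_eq_zero]
  show QuotientAddGroup.mk _ + QuotientAddGroup.mk _ - QuotientAddGroup.mk _ = (0 : CTensor R N M)
  rw [← QuotientAddGroup.mk_add, ← QuotientAddGroup.mk_sub, QuotientAddGroup.eq_zero_iff]
  have h : FreeAbelianGroup.of (n, m) + FreeAbelianGroup.of (n, m') -
      FreeAbelianGroup.of (n, m + m') =
      -(FreeAbelianGroup.of (n, m + m') - FreeAbelianGroup.of (n, m) -
        FreeAbelianGroup.of (n, m')) := by abel
  rw [h]
  exact neg_mem (AddSubgroup.subset_closure (Or.inr (Or.inl ⟨n, m, m', rfl⟩)))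

theorem ctmul_smul (r : R) (n : N) (m : M) :
    ctmul R N M (op r • n) m = ctmul R N M n (r • m) := by
  rw [← sub_eq_zero]
  show QuotientAddGroup.mk _ - QuotientAddGroup.mk _ = (0 : CTensor R N M)
  rw [← QuotientAddGroup.mk_sub, QuotientAddGroup.eq_zero_iff]
  apply AddSubgroup.subset_closure
  right; right
  exact ⟨r, n, m, rfl⟩

variable (R N M)

/-- Universal property: lift a balanced biadditive map to the balanced tensor product. -/
def ctlift {A : Type} [AddCommGroup A] (f : N → M → A)
    (h1 : ∀ n n' m, f (n + n') m = f n m + f n' m)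
    (h2 : ∀ n m m', f n (m + m') = f n m + f n m')
    (h3 : ∀ (r : R) n m, f (op r • n) m = f n (r • m)) :
    CTensor R N M →+ A :=
  QuotientAddGroup.lift _ (FreeAbelianGroup.lift fun p => f p.1 p.2) (by
    rw [tensorRels, AddSubgroup.closure_le]
    rintro x (⟨n, n', m, rfl⟩ | ⟨n, m, m', rfl⟩ | ⟨r, n, m, rfl⟩) <;>
      simp [AddMonoidHom.mem_ker, FreeAbelianGroup.lift_apply_of, h1, h2, h3])

@[simp] theorem ctlift_ctmul {A : Type} [AddCommGroup A] (f : N → M → A) (h1) (h2) (h3)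
    (n : N) (m : M) : ctlift R N M f h1 h2 h3 (ctmul R N M n m) = f n m := by
  simp [ctlift, ctmul, QuotientAddGroup.lift_mk, FreeAbelianGroup.lift_apply_of]

end CTensor

section Maps
variable (R : Type) [Ring R]

/-- Functoriality of the balanced tensor product in the right-module variable. -/
def ctmapLeft {N N' : Type} [AddCommGroup N] [Module Rᵐᵒᵖ N] [AddCommGroup N']
    [Module Rᵐᵒᵖ N'] (f : N →ₗ[Rᵐᵒᵖ] N') (M : Type) [AddCommGroup M] [Module R M] :
    CTensor R N M →+ CTensor R N' M :=
  ctlift R N M (fun n m => ctmul R N' M (f n) m)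
    (fun n n' m => by rw [map_add, ctmul_add_left])
    (fun n m m' => by rw [ctmul_add_right])
    (fun r n m => by rw [map_smul, ctmul_smul])

/-- Functoriality of the balanced tensor product in the left-module variable. -/
def ctmapRight (N : Type) [AddCommGroup N] [Module Rᵐᵒᵖ N] {M M' : Type} [AddCommGroup M]
    [Module R M] [AddCommGroup M'] [Module R M'] (f : M →ₗ[R] M') :
    CTensor R N M →+ CTensor R N M' :=
  ctlift R N M (fun n m => ctmul R N M' n (f m))
    (fun n n' m => by rw [ctmul_add_left])
    (fun n m m' => by rw [map_add, ctmul_add_right])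
    (fun r n m => by rw [ctmul_smul, map_smul])

/-- The canonical map `(∏ i, N i) ⊗ M → ∏ i, (N i ⊗ M)`. -/
def ctCanonical {ι : Type} (N : ι → Type) [∀ i, AddCommGroup (N i)]
    [∀ i, Module Rᵐᵒᵖ (N i)] (M : Type) [AddCommGroup M] [Module R M] :
    CTensor R (∀ i, N i) M →+ ∀ i, CTensor R (N i) M :=
  ctlift R (∀ i, N i) M (fun n m i => ctmul R (N i) M (n i) m)
    (fun n n' m => by funext i; exact ctmul_add_left _ _ _)
    (fun n m m' => by funext i; exact ctmul_add_right _ _ _)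
    (fun r n m => by funext i; exact ctmul_smul _ _ _)

end Maps

/-- A left `R`-module `M` is Mittag-Leffler if for every family `(Nᵢ)` of right `R`-modules the
canonical map `(∏ i, Nᵢ) ⊗_R M → ∏ i, (Nᵢ ⊗_R M)` is injective. -/
def IsMittagLeffler (R : Type) [Ring R] (M : Type) [AddCommGroup M] [Module R M] : Prop :=
  ∀ (ι : Type) (N : ι → ModuleCat Rᵐᵒᵖ),
    Function.Injective (ctCanonical R (fun i => ↥(N i)) M)

/-- A submodule `P` of the left `R`-module `M` is pure if for every right `R`-module `X` the
induced map `X ⊗_R P → X ⊗_R M` is injective. -/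
def IsPureSubmodule (R : Type) [Ring R] {M : Type} [AddCommGroup M] [Module R M]
    (P : Submodule R M) : Prop :=
  ∀ X : ModuleCat Rᵐᵒᵖ, Function.Injective (ctmapRight R ↥X P.subtype)

/-!
An element of `(∏ i, Nᵢ) ⊗ M` is a finite sum of pure tensors, so it lifts to `(∏ i, Nᵢ) ⊗ P` for
every submodule `P` containing the finitely many second factors; choose `P` pure and
Mittag-Leffler. If the element dies in `∏ i, (Nᵢ ⊗ M)`, then by naturality of the canonical map
each component of the image of the lift dies in `Nᵢ ⊗ M`, hence already in `Nᵢ ⊗ P` by purity, and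
Mittag-Leffler-ness of `P` kills the lift itself.
-/

section Lemmas

variable {R : Type} [Ring R] {N : Type} [AddCommGroup N] [Module Rᵐᵒᵖ N]
  {M : Type} [AddCommGroup M] [Module R M]

theorem CTensor.induction_on {motive : CTensor R N M → Prop} (x : CTensor R N M)
    (zero : motive 0) (tmul : ∀ n m, motive (ctmul R N M n m))
    (neg : ∀ x, motive x → motive (-x))
    (add : ∀ x y, motive x → motive y → motive (x + y)) : motive x := by
  induction x using QuotientAddGroup.induction_on with
  | H a =>
    induction a using FreeAbelianGroup.induction_on with
    | zero => exact zero
    | of p => exact tmul p.1 p.2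
    | neg a ha => exact neg _ ha
    | add a b ha hb => exact add _ _ ha hb

@[simp] theorem ctmapRight_ctmul {M' : Type} [AddCommGroup M'] [Module R M'] (f : M →ₗ[R] M')
    (n : N) (m : M) : ctmapRight R N f (ctmul R N M n m) = ctmul R N M' n (f m) := by
  simp [ctmapRight]

@[simp] theorem ctCanonical_ctmul {ι : Type} (Nf : ι → Type) [∀ i, AddCommGroup (Nf i)]
    [∀ i, Module Rᵐᵒᵖ (Nf i)] (n : ∀ i, Nf i) (m : M) (i : ι) :
    ctCanonical R Nf M (ctmul R (∀ i, Nf i) M n m) i = ctmul R (Nf i) M (n i) m := by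
  simp [ctCanonical]

theorem exists_finset_mem_range_ctmapRight_subtype (x : CTensor R N M) :
    ∃ s : Finset M, ∀ P : Submodule R M, (s : Set M) ⊆ P →
      x ∈ (ctmapRight R N P.subtype).range := by
  classical
  induction x using CTensor.induction_on with
  | zero => exact ⟨∅, fun P _ => zero_mem _⟩
  | tmul n m =>
    refine ⟨{m}, fun P hP => ⟨ctmul R N P n ⟨m, hP (Finset.mem_singleton_self m)⟩, ?_⟩⟩
    simp
  | neg x hx =>
    obtain ⟨s, hs⟩ := hx
    exact ⟨s, fun P hP => neg_mem (hs P hP)⟩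
  | add x y hx hy =>
    obtain ⟨s, hs⟩ := hx
    obtain ⟨t, ht⟩ := hy
    refine ⟨s ∪ t, fun P hP => add_mem (hs P ?_) (ht P ?_)⟩ <;>
      exact subset_trans (by simp) hP

theorem ctCanonical_ctmapRight {ι : Type} (Nf : ι → Type) [∀ i, AddCommGroup (Nf i)]
    [∀ i, Module Rᵐᵒᵖ (Nf i)] {M' : Type} [AddCommGroup M'] [Module R M'] (f : M →ₗ[R] M')
    (y : CTensor R (∀ i, Nf i) M) (i : ι) :
    ctCanonical R Nf M' (ctmapRight R (∀ i, Nf i) f y) i =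
      ctmapRight R (Nf i) f (ctCanonical R Nf M y i) := by
  induction y using CTensor.induction_on with
  | zero => simp
  | tmul n m => simp
  | neg y hy => simp only [map_neg, Pi.neg_apply, hy]
  | add y z hy hz => simp only [map_add, Pi.add_apply, hy, hz]

end Lemmas

/-- A left `R`-module is Mittag-Leffler if every finite subset is contained in a pure submodule
that is Mittag-Leffler. -/
theorem mittagLeffler_of_finite_subsets_in_pure_ML (R M : Type) [Ring R] [AddCommGroup M]
    [Module R M]
    (h : ∀ s : Finset M, ∃ P : Submodule R M, (s : Set M) ⊆ (P : Set M) ∧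
      IsPureSubmodule R P ∧ IsMittagLeffler R ↥P) :
    IsMittagLeffler R M := by
  intro ι N
  rw [injective_iff_map_eq_zero]
  intro x hx
  obtain ⟨s, hs⟩ := exists_finset_mem_range_ctmapRight_subtype x
  obtain ⟨P, hsP, hpure, hML⟩ := h s
  obtain ⟨y, rfl⟩ := hs P hsP
  have hy : ctCanonical R (fun i => ↥(N i)) P y = 0 := by
    funext i
    refine (injective_iff_map_eq_zero _).mp (hpure (N i)) _ ?_
    rw [← ctCanonical_ctmapRight (fun i => ↥(N i)), hx, Pi.zero_apply]
  rw [(injective_iff_map_eq_zero _).mp (hML ι N) y hy, map_zero]
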